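/- arXiv:1907.08927 — 3 statements merged into one kernel-verified Lean document; each statement's English description precedes it below -/
import Mathlib

section
/- Let α ≥ 2, h > 0, N ≥ 1, points (x_i,y_i) ∈ ℝ², and rates r_i with 0 < r_min ≤ r_i ≤ r_max. Let (x_med, y_med) be the coordinate-wise medians, and let (x_opt, y_opt) be any point in ℝ². Then ∑_i ((x_i−x_med)² + (y_i−y_med)² + h²)^{α/2} ≤ 2^{α/2} N^{α/2−1} (r_max/r_min) · ∑_i ((x_i−x_opt)² + (y_i−y_opt)² + h²)^{α/2}. -/
/-!
At least half of the samples lie on the far side of a median `m` from any point `c`, and each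
of them pays `(c - m)²` extra in `∑ (fᵢ - c)²`; this gives `∑ (fᵢ - m)² ≤ 2 ∑ (fᵢ - c)²` in
each coordinate. Hence `aᵢ = ‖pᵢ - p_med‖² + h²` and `bᵢ = ‖pᵢ - p_opt‖² + h²` satisfy
`∑ aᵢ ≤ 2 ∑ bᵢ`, and for `p = α / 2 ≥ 1`
`∑ aᵢ ^ p ≤ (∑ aᵢ) ^ p ≤ 2 ^ p (∑ bᵢ) ^ p ≤ 2 ^ p N ^ (p - 1) ∑ bᵢ ^ p`.
-/

open Finset

theorem Real.sum_rpow_le_rpow_sum {ι : Type*} {s : Finset ι} {f : ι → ℝ} {p : ℝ}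
    (hf : ∀ i ∈ s, 0 ≤ f i) (hp : 1 ≤ p) :
    ∑ i ∈ s, f i ^ p ≤ (∑ i ∈ s, f i) ^ p := by
  have rpow_eq_mul : ∀ a : ℝ, 0 ≤ a → a ^ p = a * a ^ (p - 1) := fun a ha => by
    rw [← Real.rpow_one_add' ha (by linarith), add_sub_cancel]
  calc ∑ i ∈ s, f i ^ p = ∑ i ∈ s, f i * f i ^ (p - 1) :=
        sum_congr rfl fun i hi => rpow_eq_mul _ (hf i hi)
    _ ≤ ∑ i ∈ s, f i * (∑ j ∈ s, f j) ^ (p - 1) :=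
        sum_le_sum fun i hi => mul_le_mul_of_nonneg_left
          (Real.rpow_le_rpow (hf i hi) (single_le_sum hf hi) (by linarith)) (hf i hi)
    _ = (∑ i ∈ s, f i) ^ p := by rw [← sum_mul, rpow_eq_mul _ (sum_nonneg hf)]

section Median

variable {ι : Type*} {s : Finset ι} {f : ι → ℝ} {m : ℝ}

def IsMedian (s : Finset ι) (f : ι → ℝ) (m : ℝ) : Prop :=
  #s ≤ 2 * #{i ∈ s | f i ≤ m} ∧ #s ≤ 2 * #{i ∈ s | m ≤ f i}

theorem sum_sq_sub_le_two_mul_sum_sq_sub_of_le {c : ℝ} (hmc : m ≤ c)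
    (hm : #s ≤ 2 * #{i ∈ s | f i ≤ m}) :
    ∑ i ∈ s, (f i - m) ^ 2 ≤ 2 * ∑ i ∈ s, (f i - c) ^ 2 := by
  set g : ι → ℝ := fun i => 2 * (f i - c) ^ 2 - (f i - m) ^ 2
  suffices 0 ≤ ∑ i ∈ s, g i by rwa [sum_sub_distrib, ← mul_sum, sub_nonneg] at this
  set d := c - m
  have below : ∀ i ∈ s.filter (f · ≤ m), 2 * d ^ 2 ≤ g i := fun i hi => by
    nlinarith [(mem_filter.1 hi).2]
  -- `g i + 2 d² = (f i - m - 2 d)²`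
  have above : ∀ i ∈ s.filter (¬ f · ≤ m), -(2 * d ^ 2) ≤ g i := fun i _ => by
    nlinarith [sq_nonneg (f i - m - 2 * d)]
  have h₁ := card_nsmul_le_sum _ g _ below
  have h₂ := card_nsmul_le_sum _ g _ above
  rw [nsmul_eq_mul] at h₁ h₂
  have hm' : (#s : ℝ) ≤ 2 * #{i ∈ s | f i ≤ m} := by exact_mod_cast hm
  rw [← card_filter_add_card_filter_not (f · ≤ m), Nat.cast_add] at hm'
  rw [← sum_filter_add_sum_filter_not s (f · ≤ m)]
  nlinarith [sq_nonneg d]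

theorem IsMedian.sum_sq_sub_le_two_mul_sum_sq_sub (hm : IsMedian s f m) (c : ℝ) :
    ∑ i ∈ s, (f i - m) ^ 2 ≤ 2 * ∑ i ∈ s, (f i - c) ^ 2 := by
  rcases le_total m c with hmc | hcm
  · exact sum_sq_sub_le_two_mul_sum_sq_sub_of_le hmc hm.1
  · have hneg : #{i ∈ s | -f i ≤ -m} = #{i ∈ s | m ≤ f i} := by simp only [neg_le_neg_iff]
    have := sum_sq_sub_le_two_mul_sum_sq_sub_of_le (f := (- f ·)) (neg_le_neg hcm) (hneg ▸ hm.2)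
    simpa only [neg_sub_neg, sub_sq_comm m, sub_sq_comm c] using this

theorem IsMedian.sum_sq_dist_add_le_two_mul {x y : ι → ℝ} {xmed ymed : ℝ}
    (hx : IsMedian s x xmed) (hy : IsMedian s y ymed) (xopt yopt h : ℝ) :
    ∑ i ∈ s, ((x i - xmed) ^ 2 + (y i - ymed) ^ 2 + h ^ 2) ≤
      2 * ∑ i ∈ s, ((x i - xopt) ^ 2 + (y i - yopt) ^ 2 + h ^ 2) := by
  have hh : 0 ≤ ∑ _i ∈ s, h ^ 2 := by positivity
  simp only [sum_add_distrib]
  linarith [hx.sum_sq_sub_le_two_mul_sum_sq_sub xopt, hy.sum_sq_sub_le_two_mul_sum_sq_sub yopt]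

end Median

theorem median_vs_optimal_core_inequality_general
    (N : ℕ) (hN : 1 ≤ N) (α h : ℝ) (hα : 2 ≤ α)
    (x y : Fin N → ℝ) (r : Fin N → ℝ) (rmin rmax : ℝ)
    (hrmin : 0 < rmin) (hr : ∀ i, rmin ≤ r i ∧ r i ≤ rmax)
    (xmed ymed : ℝ)
    (hx1 : N ≤ 2 * (univ.filter (fun i => x i ≤ xmed)).card)
    (hx2 : N ≤ 2 * (univ.filter (fun i => xmed ≤ x i)).card)
    (hy1 : N ≤ 2 * (univ.filter (fun i => y i ≤ ymed)).card)
    (hy2 : N ≤ 2 * (univ.filter (fun i => ymed ≤ y i)).card)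
    (xopt yopt : ℝ) :
    ∑ i, ((x i - xmed) ^ 2 + (y i - ymed) ^ 2 + h ^ 2) ^ (α / 2) ≤
      (2 : ℝ) ^ (α / 2) * (N : ℝ) ^ (α / 2 - 1) * (rmax / rmin) *
        ∑ i, ((x i - xopt) ^ 2 + (y i - yopt) ^ 2 + h ^ 2) ^ (α / 2) := by
  have hp : 1 ≤ α / 2 := by linarith
  set a : Fin N → ℝ := fun i => (x i - xmed) ^ 2 + (y i - ymed) ^ 2 + h ^ 2
  set b : Fin N → ℝ := fun i => (x i - xopt) ^ 2 + (y i - yopt) ^ 2 + h ^ 2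
  have ha : ∀ i ∈ univ, 0 ≤ a i := fun i _ => by positivity
  have hb : ∀ i ∈ univ, 0 ≤ b i := fun i _ => by positivity
  have hxmed : IsMedian univ x xmed := by
    rw [IsMedian, card_univ, Fintype.card_fin]; exact ⟨hx1, hx2⟩
  have hymed : IsMedian univ y ymed := by
    rw [IsMedian, card_univ, Fintype.card_fin]; exact ⟨hy1, hy2⟩
  have hab : ∑ i, a i ≤ 2 * ∑ i, b i := hxmed.sum_sq_dist_add_le_two_mul hymed xopt yopt h
  have hratio : 1 ≤ rmax / rmin := (one_le_div hrmin).2 ((hr ⟨0, hN⟩).1.trans (hr ⟨0, hN⟩).2)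
  calc ∑ i, a i ^ (α / 2) ≤ (∑ i, a i) ^ (α / 2) := Real.sum_rpow_le_rpow_sum ha hp
    _ ≤ (2 * ∑ i, b i) ^ (α / 2) := Real.rpow_le_rpow (sum_nonneg ha) hab (by linarith)
    _ = 2 ^ (α / 2) * (∑ i, b i) ^ (α / 2) := Real.mul_rpow zero_le_two (sum_nonneg hb)
    _ ≤ 2 ^ (α / 2) * ((N : ℝ) ^ (α / 2 - 1) * ∑ i, b i ^ (α / 2)) := by
        gcongr
        simpa using Real.rpow_sum_le_const_mul_sum_rpow_of_nonneg univ hp hb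
    _ ≤ 2 ^ (α / 2) * (N : ℝ) ^ (α / 2 - 1) * (rmax / rmin) * ∑ i, b i ^ (α / 2) := by
        rw [← mul_assoc]
        exact mul_le_mul_of_nonneg_right (le_mul_of_one_le_right (by positivity) hratio)
          (sum_nonneg fun i _ => by positivity)

theorem median_vs_optimal_core_inequality
    (N : ℕ) (hN : 1 ≤ N) (α h : ℝ) (hα : 2 ≤ α) (hh : 0 < h)
    (x y : Fin N → ℝ) (r : Fin N → ℝ) (rmin rmax : ℝ)
    (hrmin : 0 < rmin) (hr : ∀ i, rmin ≤ r i ∧ r i ≤ rmax)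
    (xmed ymed : ℝ)
    (hx1 : N ≤ 2 * (univ.filter (fun i => x i ≤ xmed)).card)
    (hx2 : N ≤ 2 * (univ.filter (fun i => xmed ≤ x i)).card)
    (hy1 : N ≤ 2 * (univ.filter (fun i => y i ≤ ymed)).card)
    (hy2 : N ≤ 2 * (univ.filter (fun i => ymed ≤ y i)).card)
    (xopt yopt : ℝ) :
    ∑ i, ((x i - xmed) ^ 2 + (y i - ymed) ^ 2 + h ^ 2) ^ (α / 2) ≤
      (2 : ℝ) ^ (α / 2) * (N : ℝ) ^ (α / 2 - 1) * (rmax / rmin) *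
        ∑ i, ((x i - xopt) ^ 2 + (y i - yopt) ^ 2 + h ^ 2) ^ (α / 2) :=
  median_vs_optimal_core_inequality_general N hN α h hα x y r rmin rmax hrmin hr xmed ymed hx1 hx2
    hy1 hy2 xopt yopt
end

section
/- Fix S > 0 (sum of others' rates), P > 0, D > 0, g > 0, B > 0, b ≥ 0, α ≥ 2. The best-response problem max_{r ≥ 0} (r/(r+S))·P − (D^α/g)(2^{r/B} − 1) − b·r has a unique maximizer. -/
/-!
On `r > -S` the payoff is continuous, and its derivative `S P / (r + S)² - c (log 2 / B) 2^(r/B) - b`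
is strictly decreasing, so the payoff is strictly concave. The exponential cost makes it tend to
`-∞`, so it attains a maximum on the closed half-line `[0, ∞)`, and strict concavity makes the
maximizer unique.
-/

open Set Real Filter

theorem StrictConcaveOn.existsUnique_isMaxOn_Ici {f : ℝ → ℝ} {a : ℝ}
    (hconc : StrictConcaveOn ℝ (Ici a) f) (hcont : ContinuousOn f (Ici a))
    (htop : Tendsto f atTop atBot) : ∃! x, x ∈ Ici a ∧ IsMaxOn f (Ici a) x := by
  obtain ⟨M, hM⟩ := eventually_atTop.1 (htop.eventually (eventually_le_atBot (f a)))
  have hfar : ∀ᶠ x in cocompact ℝ ⊓ 𝓟 (Ici a), f x ≤ f a := by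
    filter_upwards [mem_inf_of_left (isCompact_Icc (a := a) (b := M)).compl_mem_cocompact,
      mem_inf_of_right (mem_principal_self (Ici a))] with x hx hxa
    exact hM x (le_of_lt (not_le.1 fun hxM => hx ⟨hxa, hxM⟩))
  obtain ⟨x, hx, hmax⟩ := hcont.exists_isMaxOn' isClosed_Ici self_mem_Ici hfar
  exact ⟨x, ⟨hx, hmax⟩, fun y ⟨hy, hymax⟩ => hconc.eq_of_isMaxOn hymax hmax hy hx⟩

/-- `S` is the sum of the other workers' rates; the game has `c = D ^ α / g`. -/
noncomputable def ratePayoff (S P c B b r : ℝ) : ℝ :=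
  r / (r + S) * P - c * ((2 : ℝ) ^ (r / B) - 1) - b * r

section ratePayoff

variable {S P c B b : ℝ}

theorem hasDerivAt_ratePayoff {r : ℝ} (hr : r + S ≠ 0) :
    HasDerivAt (ratePayoff S P c B b)
      (S * P / (r + S) ^ 2 - c * (log 2 / B) * (2 : ℝ) ^ (r / B) - b) r := by
  have hshare := ((hasDerivAt_id r).div ((hasDerivAt_id r).add_const S) hr).mul_const P
  have hcost := (((hasDerivAt_id r).div_const B).const_rpow two_pos).sub_const 1 |>.const_mul c
  refine ((hshare.sub hcost).sub ((hasDerivAt_id r).const_mul b)).congr_deriv ?_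
  simp only [id]
  field_simp
  ring

theorem continuousOn_ratePayoff : ContinuousOn (ratePayoff S P c B b) (Ioi (-S)) := fun r hr =>
  (hasDerivAt_ratePayoff (by rw [mem_Ioi] at hr; linarith)).continuousAt.continuousWithinAt

theorem strictConcaveOn_ratePayoff (hS : 0 ≤ S) (hP : 0 ≤ P) (hc : 0 < c) (hB : 0 < B) :
    StrictConcaveOn ℝ (Ioi (-S)) (ratePayoff S P c B b) := by
  refine StrictAntiOn.strictConcaveOn_of_deriv (convex_Ioi _) continuousOn_ratePayoff ?_
  rw [interior_Ioi]
  intro r (hr : -S < r) s (hs : -S < s) hrs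
  rw [(hasDerivAt_ratePayoff (by linarith)).deriv, (hasDerivAt_ratePayoff (by linarith)).deriv]
  have hshare : S * P / (s + S) ^ 2 ≤ S * P / (r + S) ^ 2 := by
    have hrS : 0 < r + S := by linarith
    gcongr
  have hcost : c * (log 2 / B) * (2 : ℝ) ^ (r / B) < c * (log 2 / B) * (2 : ℝ) ^ (s / B) := by
    have hlog2 : 0 < log 2 := log_pos one_lt_two
    gcongr
    exact rpow_lt_rpow_of_exponent_lt one_lt_two (div_lt_div_of_pos_right hrs hB)
  linarith

theorem tendsto_ratePayoff_atTop (hS : 0 ≤ S) (hP : 0 ≤ P) (hc : 0 < c) (hB : 0 < B)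
    (hb : 0 ≤ b) : Tendsto (ratePayoff S P c B b) atTop atBot := by
  have hcost : Tendsto (fun r : ℝ => c * (2 : ℝ) ^ (r / B)) atTop atTop :=
    ((tendsto_rpow_atTop_of_base_gt_one 2 one_lt_two).comp
      (tendsto_id.atTop_div_const hB)).const_mul_atTop hc
  refine tendsto_atBot_mono' _ ?_
    (tendsto_atBot_add_const_left _ (P + c) (tendsto_neg_atTop_atBot.comp hcost))
  filter_upwards [eventually_ge_atTop 0] with r hr
  have hshare : r / (r + S) * P ≤ P :=
    mul_le_of_le_one_left hP (div_le_one_of_le₀ (by linarith) (by linarith))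
  simp only [ratePayoff, Function.comp_apply]
  nlinarith [mul_nonneg hb hr]

end ratePayoff

theorem best_response_unique_maximizer_general
    (S P D g B b α : ℝ) (hS : 0 < S) (hP : 0 < P) (hD : 0 < D)
    (hg : 0 < g) (hB : 0 < B) (hb : 0 ≤ b) :
    ∃! r : ℝ, r ∈ Set.Ici (0 : ℝ) ∧ ∀ s ∈ Set.Ici (0 : ℝ),
      s / (s + S) * P - D ^ α / g * ((2 : ℝ) ^ (s / B) - 1) - b * s ≤
      r / (r + S) * P - D ^ α / g * ((2 : ℝ) ^ (r / B) - 1) - b * r := by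
  have hc : 0 < D ^ α / g := by positivity
  have hIci : Ici (0 : ℝ) ⊆ Ioi (-S) := Ici_subset_Ioi.2 (neg_lt_zero.2 hS)
  exact StrictConcaveOn.existsUnique_isMaxOn_Ici
    ((strictConcaveOn_ratePayoff hS.le hP.le hc hB).subset hIci (convex_Ici 0))
    (continuousOn_ratePayoff.mono hIci) (tendsto_ratePayoff_atTop hS.le hP.le hc hB hb)

theorem best_response_unique_maximizer
    (S P D g B b α : ℝ) (hS : 0 < S) (hP : 0 < P) (hD : 0 < D)
    (hg : 0 < g) (hB : 0 < B) (hb : 0 ≤ b) (hα : 2 ≤ α) :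
    ∃! r : ℝ, r ∈ Set.Ici (0 : ℝ) ∧ ∀ s ∈ Set.Ici (0 : ℝ),
      s / (s + S) * P - D ^ α / g * ((2 : ℝ) ^ (s / B) - 1) - b * s ≤
      r / (r + S) * P - D ^ α / g * ((2 : ℝ) ^ (r / B) - 1) - b * r :=
  best_response_unique_maximizer_general S P D g B b α hS hP hD hg hB hb
end

section
/- For r_i > 0, i = 1,…,N with N ≥ 2, define the N×N matrix H by H_{ii} = −2P·(∑_{k≠i} r_k)/(∑_k r_k)³ − c_i with c_i > 0, and H_{ij} = P·(r_i − ∑_{k≠i} r_k)/(∑_k r_k)³ for j ≠ i, where P > 0. If r_i ≤ ∑_{k≠i} r_k for all i, then H + Hᵀ is negative definite. -/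
/-!
Writing `S = ∑ k, r k`, one has `-(H + Hᵀ) = diagonal (2c) + (2P / S³) ∑ₖ r k • Cᵏ`, where
`Cᵏ = v vᵀ + diagonal v` for the indicator `v` of the complement of `{k}`. The quadratic form
of `Cᵏ` is `x ↦ (∑_{i ≠ k} xᵢ)² + ∑_{i ≠ k} xᵢ² ≥ 0`, so adding the `Cᵏ` with nonnegative
weights to the positive definite diagonal keeps the sum positive definite.
-/

open Finset Matrix

namespace Matrix

variable {ι : Type*} [DecidableEq ι]

theorem posSemidef_vecMulVec_self_add_diagonal [Fintype ι] {v : ι → ℝ} (hv : 0 ≤ v) :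
    (vecMulVec v v + diagonal v).PosSemidef := by
  have hvv : (vecMulVec v v).PosSemidef := by
    simpa using posSemidef_vecMulVec_self_star v
  exact hvv.add (posSemidef_diagonal_iff.2 hv)

def complementForm (k : ι) : Matrix ι ι ℝ :=
  vecMulVec (1 - Pi.single k 1) (1 - Pi.single k 1) + diagonal (1 - Pi.single k 1)

theorem posSemidef_complementForm [Fintype ι] (k : ι) : (complementForm k).PosSemidef :=
  posSemidef_vecMulVec_self_add_diagonal fun i => by
    by_cases h : i = k <;> simp [h]

theorem complementForm_apply (k i j : ι) :
    complementForm k i j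
      = 1 - (if i = k then 1 else 0) - (if j = k then 1 else 0) + if i = j then 1 else 0 := by
  by_cases hik : i = k <;> by_cases hjk : j = k <;> by_cases hij : i = j <;>
    simp_all [complementForm, vecMulVec_apply]

theorem sum_smul_complementForm_apply [Fintype ι] (r : ι → ℝ) (i j : ι) :
    (∑ k, r k • complementForm k) i j
      = ∑ k, r k - r i - r j + if i = j then ∑ k, r k else 0 := by
  simp only [sum_apply, smul_apply, complementForm_apply, smul_eq_mul, mul_add, mul_sub, mul_one,
    mul_ite, mul_zero, sum_add_distrib, sum_sub_distrib, sum_ite_eq, mem_univ, if_true]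
  split_ifs <;> simp

end Matrix

theorem rate_game_matrix_negative_definite_general
    (N : ℕ) (r : Fin N → ℝ) (hr : ∀ i, 0 < r i)
    (P : ℝ) (hP : 0 < P) (c : Fin N → ℝ) (hc : ∀ i, 0 < c i)
    (H : Matrix (Fin N) (Fin N) ℝ)
    (hH : ∀ i j, H i j =
      if i = j then
        -(2 * P * (∑ k ∈ univ.erase i, r k)) / (∑ k, r k) ^ 3 - c i
      else
        P * (r i - ∑ k ∈ univ.erase i, r k) / (∑ k, r k) ^ 3) :
    (-(H + H.transpose)).PosDef := by
  have hS : 0 ≤ ∑ k, r k := sum_nonneg fun i _ => (hr i).le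
  have hdecomp : -(H + H.transpose) = diagonal (2 • c)
      + (2 * P / (∑ k, r k) ^ 3) • ∑ k, r k • complementForm k := by
    ext i j
    simp only [Matrix.neg_apply, Matrix.add_apply, transpose_apply, hH, diagonal_apply,
      Matrix.smul_apply, sum_smul_complementForm_apply, sum_erase_eq_sub (mem_univ _),
      Pi.smul_apply, smul_eq_mul]
    obtain rfl | hij := eq_or_ne i j
    · simp only [if_true]
      ring
    · simp only [hij, hij.symm, if_false]
      ring
  rw [hdecomp]
  refine (posDef_diagonal_iff.2 fun i => by simpa using hc i).add_posSemidef
    ((posSemidef_sum _ fun k _ => (posSemidef_complementForm k).smul (hr k).le).smul ?_)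
  exact div_nonneg (by positivity) (pow_nonneg hS 3)

theorem rate_game_matrix_negative_definite
    (N : ℕ) (hN : 2 ≤ N) (r : Fin N → ℝ) (hr : ∀ i, 0 < r i)
    (P : ℝ) (hP : 0 < P) (c : Fin N → ℝ) (hc : ∀ i, 0 < c i)
    (H : Matrix (Fin N) (Fin N) ℝ)
    (hH : ∀ i j, H i j =
      if i = j then
        -(2 * P * (∑ k ∈ univ.erase i, r k)) / (∑ k, r k) ^ 3 - c i
      else
        P * (r i - ∑ k ∈ univ.erase i, r k) / (∑ k, r k) ^ 3)
    (hdom : ∀ i, r i ≤ ∑ k ∈ univ.erase i, r k) :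
    (-(H + H.transpose)).PosDef :=
  rate_game_matrix_negative_definite_general N r hr P hP c hc H hH
end
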